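/- arXiv:math/0407494 — 2 statements merged into one kernel-verified Lean document; each statement's English description precedes it below -/
import Mathlib

section
/- Let $A, B$ be commuting $r \times r$ complex matrices with $AB = BA = 0$, and let $v \in \mathbb{C}^r$ be a vector such that $A$ and $B$ share no proper common invariant subspace containing $v$ (stability). Suppose $A$ and $B$ are nilpotent. Let $k$ be the largest integer with $A^k v \neq 0$, and set $l = r - k - 1$. Then the vectors $\{A^k v, A^{k-1} v, \ldots, A v, B^l v, B^{l-1} v, \ldots, B v, v\}$ form a basis of $\mathbb{C}^r$. -/
open Submodule Module


lemma aux_span {r n : ℕ} (hn : n < r)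
    (f g : (Fin r → ℂ) →ₗ[ℂ] (Fin r → ℂ)) (v : Fin r → ℂ)
    (hstab : ∀ W : Submodule ℂ (Fin r → ℂ),
      (∀ x ∈ W, f x ∈ W) → (∀ x ∈ W, g x ∈ W) → v ∈ W → W = ⊤)
    (u : Fin n → Fin r → ℂ)
    (hfu : ∀ i, f (u i) ∈ span ℂ (Set.range u))
    (hgu : ∀ i, g (u i) ∈ span ℂ (Set.range u))
    (hv : v ∈ span ℂ (Set.range u)) : False := by
  set W := span ℂ (Set.range u) with hW
  have hfc : ∀ x ∈ W, f x ∈ W := by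
    intro x hx
    have h1 : W ≤ W.comap f := by
      rw [hW, span_le]; rintro _ ⟨i, rfl⟩; exact hfu i
    exact h1 hx
  have hgc : ∀ x ∈ W, g x ∈ W := by
    intro x hx
    have h1 : W ≤ W.comap g := by
      rw [hW, span_le]; rintro _ ⟨i, rfl⟩; exact hgu i
    exact h1 hx
  have htop := hstab W hfc hgc hv
  have h1 : finrank ℂ W ≤ n := by
    refine le_trans (finrank_span_le_card (R := ℂ) (Set.range u)) ?_
    rw [Set.toFinset_range]
    exact le_trans Finset.card_image_le (by simp)
  rw [htop, finrank_top, Module.finrank_fin_fun] at h1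
  omega

set_option maxHeartbeats 1000000 in
lemma core {r k l : ℕ} (hr : r = k + l + 1) (hl : 1 ≤ l)
    (f g : (Fin r → ℂ) →ₗ[ℂ] (Fin r → ℂ)) (v : Fin r → ℂ)
    (hstab : ∀ W : Submodule ℂ (Fin r → ℂ),
      (∀ x ∈ W, f x ∈ W) → (∀ x ∈ W, g x ∈ W) → v ∈ W → W = ⊤)
    (hfk1 : (f ^ (k + 1)) v = 0)
    (hfg : ∀ x, f (g x) = 0) (hgf : ∀ x, g (f x) = 0)
    (μ : ℂ) (hμ : (g ^ l) v = μ • (f ^ k) v) : False := by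
  have hn : k + l < r := by omega
  set u : Fin (k + l) → (Fin r → ℂ) :=
    fun i => if (i : ℕ) ≤ k then (f ^ (i : ℕ)) v else (g ^ ((i : ℕ) - k)) v with hu
  have hval1 : ∀ j : Fin (k + l), (j : ℕ) ≤ k → u j = (f ^ (j : ℕ)) v := by
    intro j hj; simp only [hu, if_pos hj]
  have hval2 : ∀ j : Fin (k + l), ¬ (j : ℕ) ≤ k → u j = (g ^ ((j : ℕ) - k)) v := by
    intro j hj; simp only [hu, if_neg hj]
  have humem : ∀ j : Fin (k + l), u j ∈ span ℂ (Set.range u) :=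
    fun j => subset_span ⟨j, rfl⟩
  apply aux_span hn f g v hstab u ?_ ?_ ?_
  · intro i
    by_cases h1 : (i : ℕ) ≤ k
    · rcases Nat.lt_or_ge (i : ℕ) k with h2 | h2
      · have he : f (u i) = u ⟨(i : ℕ) + 1, by omega⟩ := by
          rw [hval1 i h1, hval1 ⟨(i : ℕ) + 1, by omega⟩ (by simpa using h2)]
          rw [pow_succ']
          rfl
        rw [he]; exact humem _
      · have hik : (i : ℕ) = k := le_antisymm h1 h2
        have he : f (u i) = 0 := by
          rw [hval1 i h1, hik, ← Module.End.mul_apply, ← pow_succ', hfk1]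
        rw [he]; exact zero_mem _
    · push_neg at h1
      have he : f (u i) = 0 := by
        rw [hval2 i (by omega)]
        obtain ⟨t, ht⟩ : ∃ t, (i : ℕ) - k = t + 1 := ⟨(i : ℕ) - k - 1, by omega⟩
        rw [ht, pow_succ', Module.End.mul_apply]
        exact hfg _
      rw [he]; exact zero_mem _
  · intro i
    by_cases h1 : (i : ℕ) ≤ k
    · rcases Nat.eq_zero_or_pos (i : ℕ) with h0 | h0
      · -- g v = g^1 v
        have he : g (u i) = (g ^ 1) v := by
          rw [hval1 i h1, h0, pow_zero, pow_one, Module.End.one_apply]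
        by_cases hl1 : l = 1
        · have he2 : (g ^ 1) v = μ • (f ^ k) v := by rw [hl1] at hμ; exact hμ
          rw [he, he2]
          have : (f ^ k) v = u ⟨k, by omega⟩ := (hval1 ⟨k, by omega⟩ (by simp)).symm
          rw [this]
          exact smul_mem _ _ (humem _)
        · have he2 : (g ^ 1) v = u ⟨k + 1, by omega⟩ := by
            rw [hval2 ⟨k + 1, by omega⟩ (show ¬(k + 1 ≤ k) from by omega)]
            have e : k + 1 - k = 1 := by omega
            rw [e]
          rw [he, he2]; exact humem _
      · -- 1 ≤ i ≤ k : g (f^i v) = 0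
        have he : g (u i) = 0 := by
          rw [hval1 i h1]
          obtain ⟨t, ht⟩ : ∃ t, (i : ℕ) = t + 1 := ⟨(i : ℕ) - 1, by omega⟩
          rw [ht, pow_succ', Module.End.mul_apply]
          exact hgf _
        rw [he]; exact zero_mem _
    · push_neg at h1
      have he : g (u i) = (g ^ ((i : ℕ) - k + 1)) v := by
        rw [hval2 i (by omega), ← Module.End.mul_apply, ← pow_succ']
      by_cases h2 : (i : ℕ) + 1 < k + l
      · have he2 : (g ^ ((i : ℕ) - k + 1)) v = u ⟨(i : ℕ) + 1, h2⟩ := by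
          rw [hval2 ⟨(i : ℕ) + 1, h2⟩ (show ¬((i : ℕ) + 1 ≤ k) from by omega)]
          have e : (i : ℕ) + 1 - k = (i : ℕ) - k + 1 := by omega
          rw [e]
        rw [he, he2]; exact humem _
      · -- i - k + 1 = l
        have he2 : (i : ℕ) - k + 1 = l := by have := i.isLt; omega
        rw [he, he2, hμ]
        have : (f ^ k) v = u ⟨k, by omega⟩ := (hval1 ⟨k, by omega⟩ (by simp)).symm
        rw [this]
        exact smul_mem _ _ (humem _)
  · have he : v = u ⟨0, by omega⟩ := by
      rw [hval1 ⟨0, by omega⟩ (by simp), pow_zero, Module.End.one_apply]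
    rw [he]; exact humem _

set_option maxHeartbeats 2000000 in
/-- Let `A, B` be commuting nilpotent `r × r` complex matrices with
`AB = BA = 0` and let `v` be a stable vector (no proper common invariant subspace of `A`
and `B` contains `v`).  If `k` is the largest integer with `A^k v ≠ 0` and `l = r - k - 1`,
then `{A^k v, …, A v, B^l v, …, B v, v}` is a basis of `ℂ^r`. -/
theorem stmt_3 (r : ℕ) (A B : Matrix (Fin r) (Fin r) ℂ)
    (hAB : A * B = 0) (hBA : B * A = 0)
    (hAnil : IsNilpotent A) (hBnil : IsNilpotent B)
    (v : Fin r → ℂ)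
    (hstab : ∀ W : Submodule ℂ (Fin r → ℂ),
      (∀ x ∈ W, A.mulVec x ∈ W) → (∀ x ∈ W, B.mulVec x ∈ W) → v ∈ W → W = ⊤)
    (k l : ℕ) (hk : (A ^ k).mulVec v ≠ 0) (hk' : (A ^ (k + 1)).mulVec v = 0)
    (hr : r = k + l + 1) :
    LinearIndependent ℂ (fun i : Fin r =>
        if (i : ℕ) < k then (A ^ (k - (i : ℕ))).mulVec v
        else if (i : ℕ) < k + l then (B ^ (k + l - (i : ℕ))).mulVec v
        else v)
      ∧ Submodule.span ℂ (Set.range (fun i : Fin r =>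
        if (i : ℕ) < k then (A ^ (k - (i : ℕ))).mulVec v
        else if (i : ℕ) < k + l then (B ^ (k + l - (i : ℕ))).mulVec v
        else v)) = ⊤ := by
  classical
  set f := A.mulVecLin with hfdef
  set g := B.mulVecLin with hgdef
  have hfg : ∀ x, f (g x) = 0 := by
    intro x
    have h2 : f (g x) = (A * B).mulVecLin x := by rw [Matrix.mulVecLin_mul]; rfl
    rw [h2, hAB]
    simp
  have hgf : ∀ x, g (f x) = 0 := by
    intro x
    have h2 : g (f x) = (B * A).mulVecLin x := by rw [Matrix.mulVecLin_mul]; rfl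
    rw [h2, hBA]
    simp
  have hpowA : ∀ n : ℕ, (A ^ n).mulVec v = (f ^ n) v := by
    intro n
    induction n with
    | zero => simp [Matrix.one_mulVec]
    | succ n ih =>
      rw [pow_succ', pow_succ', ← Matrix.mulVec_mulVec, ih, Module.End.mul_apply]
      rfl
  have hpowB : ∀ n : ℕ, (B ^ n).mulVec v = (g ^ n) v := by
    intro n
    induction n with
    | zero => simp [Matrix.one_mulVec]
    | succ n ih =>
      rw [pow_succ', pow_succ', ← Matrix.mulVec_mulVec, ih, Module.End.mul_apply]
      rfl
  have hstab' : ∀ W : Submodule ℂ (Fin r → ℂ),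
      (∀ x ∈ W, f x ∈ W) → (∀ x ∈ W, g x ∈ W) → v ∈ W → W = ⊤ := by
    intro W h1 h2 h3
    exact hstab W (fun x hx => h1 x hx) (fun x hx => h2 x hx) h3
  have hcompf : ∀ a b : ℕ, (f ^ a) ((f ^ b) v) = (f ^ (a + b)) v := by
    intro a b; rw [pow_add, Module.End.mul_apply]
  have hcompg : ∀ a b : ℕ, (g ^ a) ((g ^ b) v) = (g ^ (a + b)) v := by
    intro a b; rw [pow_add, Module.End.mul_apply]
  have hfk : (f ^ k) v ≠ 0 := by rwa [hpowA] at hk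
  have hfk1 : (f ^ (k + 1)) v = 0 := by rwa [hpowA] at hk'
  have hv0 : v ≠ 0 := by
    intro h0
    apply hfk
    rw [h0, map_zero]
  have hfhi : ∀ n, k + 1 ≤ n → (f ^ n) v = 0 := by
    intro n hn
    obtain ⟨t, rfl⟩ : ∃ t, n = t + (k + 1) := ⟨n - (k + 1), by omega⟩
    rw [← hcompf t (k + 1), hfk1, map_zero]
  have hfgp : ∀ a b : ℕ, 1 ≤ a → 1 ≤ b → (f ^ a) ((g ^ b) v) = 0 := by
    intro a b ha hb
    obtain ⟨a', rfl⟩ : ∃ a', a = a' + 1 := ⟨a - 1, by omega⟩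
    obtain ⟨b', rfl⟩ : ∃ b', b = b' + 1 := ⟨b - 1, by omega⟩
    rw [pow_succ f a', pow_succ' g b', Module.End.mul_apply, Module.End.mul_apply, hfg, map_zero]
  have hgfp : ∀ a b : ℕ, 1 ≤ a → 1 ≤ b → (g ^ a) ((f ^ b) v) = 0 := by
    intro a b ha hb
    obtain ⟨a', rfl⟩ : ∃ a', a = a' + 1 := ⟨a - 1, by omega⟩
    obtain ⟨b', rfl⟩ : ∃ b', b = b' + 1 := ⟨b - 1, by omega⟩
    rw [pow_succ g a', pow_succ' f b', Module.End.mul_apply, Module.End.mul_apply, hgf, map_zero]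
  have hglv : (g ^ l) v ≠ 0 := by
    rcases Nat.eq_zero_or_pos l with h0 | h0
    · rw [h0, pow_zero, Module.End.one_apply]; exact hv0
    · intro hz
      exact core hr h0 f g v hstab' hfk1 hfg hgf 0 (by rw [hz, zero_smul])
  have hex : ∃ n, (g ^ n) v = 0 := by
    obtain ⟨N, hN⟩ := hBnil
    exact ⟨N, by rw [← hpowB, hN, Matrix.zero_mulVec]⟩
  have hM0 : (g ^ Nat.find hex) v = 0 := Nat.find_spec hex
  have hM0pos : 0 < Nat.find hex := by
    rcases Nat.eq_zero_or_pos (Nat.find hex) with h0 | h0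
    · exfalso; apply hv0; rw [h0, pow_zero, Module.End.one_apply] at hM0; exact hM0
    · exact h0
  set m := Nat.find hex - 1 with hmdef
  have hgm1 : (g ^ (m + 1)) v = 0 := by
    have : m + 1 = Nat.find hex := by omega
    rw [this]; exact hM0
  have hgm : (g ^ m) v ≠ 0 := Nat.find_min hex (by omega)
  have hghi : ∀ n, m + 1 ≤ n → (g ^ n) v = 0 := by
    intro n hn
    obtain ⟨t, rfl⟩ : ∃ t, n = t + (m + 1) := ⟨n - (m + 1), by omega⟩
    rw [← hcompg t (m + 1), hgm1, map_zero]
  have hlm : l ≤ m := by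
    by_contra hc
    exact hglv (hghi l (by omega))
  -- the family in End form
  set s : Fin r → (Fin r → ℂ) := fun i =>
    if (i : ℕ) < k then (f ^ (k - (i : ℕ))) v
    else if (i : ℕ) < k + l then (g ^ (k + l - (i : ℕ))) v
    else v with hsdef
  have hfun : (fun i : Fin r =>
      if (i : ℕ) < k then (A ^ (k - (i : ℕ))).mulVec v
      else if (i : ℕ) < k + l then (B ^ (k + l - (i : ℕ))).mulVec v
      else v) = s := by
    funext i
    by_cases h1 : (i : ℕ) < k
    · simp only [hsdef, if_pos h1]; exact hpowA _
    · by_cases h2 : (i : ℕ) < k + l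
      · simp only [hsdef, if_neg h1, if_pos h2]; exact hpowB _
      · simp only [hsdef, if_neg h1, if_neg h2]
  have hsA : ∀ i : Fin r, (i : ℕ) < k → s i = (f ^ (k - (i : ℕ))) v := by
    intro i h; simp only [hsdef, if_pos h]
  have hsB : ∀ i : Fin r, ¬ (i : ℕ) < k → (i : ℕ) < k + l →
      s i = (g ^ (k + l - (i : ℕ))) v := by
    intro i h1 h2; simp only [hsdef, if_neg h1, if_pos h2]
  have hsV : ∀ i : Fin r, ¬ (i : ℕ) < k → ¬ (i : ℕ) < k + l → s i = v := by
    intro i h1 h2; simp only [hsdef, if_neg h1, if_neg h2]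
  rw [hfun]
  have hli : LinearIndependent ℂ s := by
    rw [Fintype.linearIndependent_iff]
    intro c hc
    have key : ∀ (T : (Fin r → ℂ) →ₗ[ℂ] (Fin r → ℂ)) (i₀ : Fin r),
        (∀ i : Fin r, i ≠ i₀ → c i • T (s i) = 0) → c i₀ • T (s i₀) = 0 := by
      intro T i₀ hoth
      have h1 : ∑ i : Fin r, c i • T (s i) = 0 := by
        have h2 := congrArg T hc
        rw [map_sum, map_zero] at h2
        rw [← h2]
        exact Finset.sum_congr rfl (fun i _ => by rw [map_smul])
      rwa [Finset.sum_eq_single_of_mem i₀ (Finset.mem_univ i₀)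
        (fun b _ hb => hoth b hb)] at h1
    -- Stage 0 : coefficient of v
    have hc0 : c ⟨k + l, by omega⟩ = 0 := by
      rcases Nat.eq_zero_or_pos k with hk0 | hk1
      · have h1 := key (g ^ m) ⟨k + l, by omega⟩ ?_
        · rw [hsV ⟨k + l, by omega⟩ (show ¬ k + l < k from by omega)
            (show ¬ k + l < k + l from by omega)] at h1
          exact (smul_eq_zero.mp h1).resolve_right hgm
        · intro i hi
          have hi' : (i : ℕ) < k + l := by
            rcases Nat.lt_or_ge (i : ℕ) (k + l) with h | h
            · exact h
            · exact absurd (Fin.ext (show (i : ℕ) = k + l by have := i.isLt; omega)) hi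
          have hz : (g ^ (m + (k + l - (i : ℕ)))) v = 0 := hghi _ (by omega)
          rw [hsB i (by omega) hi', hcompg m (k + l - (i : ℕ)), hz, smul_zero]
      · have h1 := key (f ^ k) ⟨k + l, by omega⟩ ?_
        · rw [hsV ⟨k + l, by omega⟩ (show ¬ k + l < k from by omega)
            (show ¬ k + l < k + l from by omega)] at h1
          exact (smul_eq_zero.mp h1).resolve_right hfk
        · intro i hi
          have hi' : (i : ℕ) < k + l := by
            rcases Nat.lt_or_ge (i : ℕ) (k + l) with h | h
            · exact h
            · exact absurd (Fin.ext (show (i : ℕ) = k + l by have := i.isLt; omega)) hi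
          by_cases h2 : (i : ℕ) < k
          · have hz : (f ^ (k + (k - (i : ℕ)))) v = 0 := hfhi _ (by omega)
            rw [hsA i h2, hcompf k (k - (i : ℕ)), hz, smul_zero]
          · have hz : (f ^ k) ((g ^ (k + l - (i : ℕ))) v) = 0 :=
              hfgp k (k + l - (i : ℕ)) (by omega) (by omega)
            rw [hsB i h2 hi', hz, smul_zero]
    -- Stage 1 : A-chain, kills coefficients of f^p v for 1 ≤ p < k
    have hcA : ∀ p, 1 ≤ p → p < k → c ⟨k - p, by omega⟩ = 0 := by
      intro p
      induction p using Nat.strong_induction_on with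
      | _ p ih =>
        intro hp1 hpk
        have h1 := key (f ^ (k - p)) ⟨k - p, by omega⟩ ?_
        · rw [hsA ⟨k - p, by omega⟩ (show k - p < k by omega)] at h1
          have e1 : k - (k - p) = p := by omega
          rw [e1, hcompf (k - p) p, show k - p + p = k by omega] at h1
          exact (smul_eq_zero.mp h1).resolve_right hfk
        · intro i hi
          by_cases h2 : (i : ℕ) < k
          · rcases Nat.lt_or_ge (i : ℕ) (k - p) with h3 | h3
            · have hz : (f ^ (k - p + (k - (i : ℕ)))) v = 0 := hfhi _ (by omega)
              rw [hsA i h2, hcompf (k - p) (k - (i : ℕ)), hz, smul_zero]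
            · have h4 : k - p < (i : ℕ) := by
                rcases Nat.lt_or_ge (k - p) (i : ℕ) with h | h
                · exact h
                · exact absurd (Fin.ext (show (i : ℕ) = k - p by omega)) hi
              have h5 : c i = 0 := by
                have h6 := ih (k - (i : ℕ)) (by omega) (by omega) (by omega)
                have h7 : i = ⟨k - (k - (i : ℕ)), by omega⟩ :=
                  Fin.ext (show (i : ℕ) = k - (k - (i : ℕ)) from by omega)
                rw [h7]; exact h6
              rw [h5, zero_smul]
          · by_cases h3 : (i : ℕ) < k + l
            · have hz : (f ^ (k - p)) ((g ^ (k + l - (i : ℕ))) v) = 0 :=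
                hfgp (k - p) (k + l - (i : ℕ)) (by omega) (by omega)
              rw [hsB i h2 h3, hz, smul_zero]
            · have h4 : i = ⟨k + l, by omega⟩ := Fin.ext (show (i : ℕ) = k + l from by have := i.isLt; omega)
              rw [h4, hc0, zero_smul]
    -- Stage 2 : B-chain, kills coefficients of g^q v for 1 ≤ q ≤ l with q < m
    have hcB : ∀ q, 1 ≤ q → q ≤ l → q < m → c ⟨k + l - q, by omega⟩ = 0 := by
      intro q
      induction q using Nat.strong_induction_on with
      | _ q ih =>
        intro hq1 hql hqm
        have h1 := key (g ^ (m - q)) ⟨k + l - q, by omega⟩ ?_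
        · rw [hsB ⟨k + l - q, by omega⟩ (show ¬ k + l - q < k by omega)
            (show k + l - q < k + l by omega)] at h1
          have e1 : k + l - (k + l - q) = q := by omega
          rw [e1, hcompg (m - q) q, show m - q + q = m by omega] at h1
          exact (smul_eq_zero.mp h1).resolve_right hgm
        · intro i hi
          by_cases h2 : (i : ℕ) < k
          · have hz : (g ^ (m - q)) ((f ^ (k - (i : ℕ))) v) = 0 :=
              hgfp (m - q) (k - (i : ℕ)) (by omega) (by omega)
            rw [hsA i h2, hz, smul_zero]
          · by_cases h3 : (i : ℕ) < k + l
            · rcases Nat.lt_or_ge (q : ℕ) (k + l - (i : ℕ)) with h4 | h4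
              · have hz : (g ^ (m - q + (k + l - (i : ℕ)))) v = 0 := hghi _ (by omega)
                rw [hsB i h2 h3, hcompg (m - q) (k + l - (i : ℕ)), hz, smul_zero]
              · have h5 : k + l - (i : ℕ) < q := by
                  rcases Nat.lt_or_ge (k + l - (i : ℕ)) q with h | h
                  · exact h
                  · exact absurd (Fin.ext (show (i : ℕ) = k + l - q by omega)) hi
                have h6 : c i = 0 := by
                  have h7 := ih (k + l - (i : ℕ)) (by omega) (by omega) (by omega) (by omega)
                  have h8 : i = ⟨k + l - (k + l - (i : ℕ)), by omega⟩ :=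
                    Fin.ext (show (i : ℕ) = k + l - (k + l - (i : ℕ)) from by omega)
                  rw [h8]; exact h7
                rw [h6, zero_smul]
            · have h4 : i = ⟨k + l, by omega⟩ := Fin.ext (show (i : ℕ) = k + l from by have := i.isLt; omega)
              rw [h4, hc0, zero_smul]
    -- Stage 3a : coefficient of g^l v  (index k), when l ≥ 1
    have hcK : 1 ≤ l → c ⟨k, by omega⟩ = 0 := by
      intro hl1
      rcases Nat.lt_or_ge l m with hlt | hge
      · have h1 := hcB l hl1 le_rfl hlt
        have h2 : (⟨k + l - l, by omega⟩ : Fin r) = ⟨k, by omega⟩ :=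
          Fin.ext (show k + l - l = k from by omega)
        rwa [h2] at h1
      · have hlm' : l = m := by omega
        rcases Nat.eq_zero_or_pos k with hk0 | hk1
        · -- k = 0 : single leftover term
          have h1 := key LinearMap.id ⟨k, by omega⟩ ?_
          · have hval : s ⟨k, by omega⟩ = (g ^ (k + l - k)) v :=
              hsB ⟨k, by omega⟩ (show ¬ k < k from by omega) (show k < k + l from by omega)
            rw [show k + l - k = l from by omega] at hval
            rw [LinearMap.id_apply, hval] at h1
            exact (smul_eq_zero.mp h1).resolve_right hglv
          · intro i hi
            have hik : ¬ (i : ℕ) < k := by omega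
            have h2 : 0 < (i : ℕ) := by
              rcases Nat.eq_zero_or_pos (i : ℕ) with h | h
              · exact absurd (Fin.ext (show (i : ℕ) = k from by omega)) hi
              · exact h
            by_cases h3 : (i : ℕ) < k + l
            · have h5 : c i = 0 := by
                have h7 := hcB (k + l - (i : ℕ)) (by omega) (by omega) (by omega)
                have h8 : i = ⟨k + l - (k + l - (i : ℕ)), by omega⟩ :=
                  Fin.ext (show (i : ℕ) = k + l - (k + l - (i : ℕ)) from by omega)
                rw [h8]; exact h7
              rw [h5, zero_smul]
            · have h4 : i = ⟨k + l, by omega⟩ := Fin.ext (show (i : ℕ) = k + l from by have := i.isLt; omega)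
              rw [h4, hc0, zero_smul]
        · -- k ≥ 1 : possibly two leftover terms; use core to rule out b_l ≠ 0
          by_contra hck0
          have hne : (⟨0, by omega⟩ : Fin r) ≠ ⟨k, by omega⟩ :=
            Fin.ne_of_val_ne (show (0 : ℕ) ≠ k from by omega)
          have hR : c ⟨0, by omega⟩ • s ⟨0, by omega⟩ + c ⟨k, by omega⟩ • s ⟨k, by omega⟩ = 0 := by
            have h2 : ∑ i ∈ ({⟨0, by omega⟩, ⟨k, by omega⟩} : Finset (Fin r)),
                c i • s i = ∑ i : Fin r, c i • s i := by
              apply Finset.sum_subset (Finset.subset_univ _)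
              intro i _ hi
              simp only [Finset.mem_insert, Finset.mem_singleton] at hi
              push_neg at hi
              obtain ⟨hi1, hi2⟩ := hi
              by_cases h3 : (i : ℕ) < k
              · have h4 : 0 < (i : ℕ) := by
                  rcases Nat.eq_zero_or_pos (i : ℕ) with h | h
                  · exact absurd (Fin.ext (show (i : ℕ) = (0 : ℕ) from by omega)) hi1
                  · exact h
                have h5 : c i = 0 := by
                  have h6 := hcA (k - (i : ℕ)) (by omega) (by omega)
                  have h7 : i = ⟨k - (k - (i : ℕ)), by omega⟩ :=
                  Fin.ext (show (i : ℕ) = k - (k - (i : ℕ)) from by omega)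
                  rw [h7]; exact h6
                rw [h5, zero_smul]
              · by_cases h4 : (i : ℕ) < k + l
                · have hq : k + l - (i : ℕ) < m := by
                    have : k < (i : ℕ) := by
                      rcases Nat.lt_or_ge k (i : ℕ) with h | h
                      · exact h
                      · exact absurd (Fin.ext (show (i : ℕ) = k from by omega)) hi2
                    omega
                  have h5 : c i = 0 := by
                    have h6 := hcB (k + l - (i : ℕ)) (by omega) (by omega) hq
                    have h7 : i = ⟨k + l - (k + l - (i : ℕ)), by omega⟩ :=
                      Fin.ext (show (i : ℕ) = k + l - (k + l - (i : ℕ)) from by omega)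
                    rw [h7]; exact h6
                  rw [h5, zero_smul]
                · have h5 : i = ⟨k + l, by omega⟩ := Fin.ext (show (i : ℕ) = k + l from by have := i.isLt; omega)
                  rw [h5, hc0, zero_smul]
            rw [Finset.sum_pair hne] at h2
            rw [h2, hc]
          have hv1 : s ⟨0, by omega⟩ = (f ^ (k - 0)) v :=
            hsA ⟨0, by omega⟩ (show (0 : ℕ) < k from by omega)
          rw [show k - 0 = k from by omega] at hv1
          have hv2 : s ⟨k, by omega⟩ = (g ^ (k + l - k)) v :=
            hsB ⟨k, by omega⟩ (show ¬ k < k from by omega) (show k < k + l from by omega)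
          rw [show k + l - k = l from by omega] at hv2
          rw [hv1, hv2] at hR
          have h9 : c ⟨k, by omega⟩ • (g ^ l) v = -(c ⟨0, by omega⟩ • (f ^ k) v) :=
            eq_neg_of_add_eq_zero_right hR
          rw [← neg_smul] at h9
          have h10 : (g ^ l) v = ((c ⟨k, by omega⟩)⁻¹ * (- c ⟨0, by omega⟩)) • (f ^ k) v := by
            rw [mul_smul, ← h9, smul_smul, inv_mul_cancel₀ hck0, one_smul]
          exact core hr hl1 f g v hstab' hfk1 hfg hgf _ h10
    -- Stage 3b : coefficient of f^k v  (index 0), when k ≥ 1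
    have hc00 : 1 ≤ k → c ⟨0, by omega⟩ = 0 := by
      intro hk1
      have h1 := key LinearMap.id ⟨0, by omega⟩ ?_
      · have hv1 : s ⟨0, by omega⟩ = (f ^ (k - 0)) v :=
          hsA ⟨0, by omega⟩ (show (0 : ℕ) < k from by omega)
        rw [show k - 0 = k from by omega] at hv1
        rw [LinearMap.id_apply, hv1] at h1
        exact (smul_eq_zero.mp h1).resolve_right hfk
      · intro i hi
        have h2 : 0 < (i : ℕ) := by
          rcases Nat.eq_zero_or_pos (i : ℕ) with h | h
          · exact absurd (Fin.ext (show (i : ℕ) = (0 : ℕ) from by omega)) hi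
          · exact h
        rw [LinearMap.id_apply]
        by_cases h3 : (i : ℕ) < k
        · have h5 : c i = 0 := by
            have h6 := hcA (k - (i : ℕ)) (by omega) (by omega)
            have h7 : i = ⟨k - (k - (i : ℕ)), by omega⟩ :=
              Fin.ext (show (i : ℕ) = k - (k - (i : ℕ)) from by omega)
            rw [h7]; exact h6
          rw [h5, zero_smul]
        · by_cases h4 : (i : ℕ) < k + l
          · rcases Nat.lt_or_ge (k + l - (i : ℕ)) m with h5 | h5
            · have h6 := hcB (k + l - (i : ℕ)) (by omega) (by omega) h5
              have h7 : i = ⟨k + l - (k + l - (i : ℕ)), by omega⟩ :=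
                Fin.ext (show (i : ℕ) = k + l - (k + l - (i : ℕ)) from by omega)
              rw [h7, h6, zero_smul]
            · have h7 : i = ⟨k, by omega⟩ := Fin.ext (show (i : ℕ) = k from by omega)
              rw [h7, hcK (by omega), zero_smul]
          · have h5 : i = ⟨k + l, by omega⟩ :=
              Fin.ext (show (i : ℕ) = k + l from by have := i.isLt; omega)
            rw [h5, hc0, zero_smul]
    -- assemble
    intro i
    by_cases h1 : (i : ℕ) < k
    · rcases Nat.eq_zero_or_pos (i : ℕ) with h0 | h0
      · have h2 : i = ⟨0, by omega⟩ := Fin.ext (show (i : ℕ) = (0 : ℕ) from h0)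
        rw [h2]; exact hc00 (by omega)
      · have h2 : i = ⟨k - (k - (i : ℕ)), by omega⟩ :=
          Fin.ext (show (i : ℕ) = k - (k - (i : ℕ)) from by omega)
        rw [h2]; exact hcA (k - (i : ℕ)) (by omega) (by omega)
    · by_cases h2 : (i : ℕ) < k + l
      · rcases Nat.lt_or_ge (k + l - (i : ℕ)) m with h5 | h5
        · have h7 : i = ⟨k + l - (k + l - (i : ℕ)), by omega⟩ :=
            Fin.ext (show (i : ℕ) = k + l - (k + l - (i : ℕ)) from by omega)
          rw [h7]; exact hcB (k + l - (i : ℕ)) (by omega) (by omega) h5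
        · have h7 : i = ⟨k, by omega⟩ := Fin.ext (show (i : ℕ) = k from by omega)
          rw [h7]; exact hcK (by omega)
      · have h7 : i = ⟨k + l, by omega⟩ :=
          Fin.ext (show (i : ℕ) = k + l from by have := i.isLt; omega)
        rw [h7]; exact hc0
  refine ⟨hli, ?_⟩
  exact hli.span_eq_top_of_card_eq_finrank'
    (by simp [Module.finrank_fin_fun, hr])
end

section
/- Let $f(x) = x^r + \sum_{a=1}^{k} \epsilon\, g_a(\epsilon) x^{r-a} + \sum_{b=1}^{l+1} \epsilon^b g_{k+b}(\epsilon) x^{l+1-b}$ where $r = k+l+1$ and the $g_j$ are polynomial (or analytic) functions of $\epsilon$. Then the resultant $\mathrm{Res}(f, f')$, as a function of $\epsilon$, vanishes to order at least $r + l^2 - 1$ at $\epsilon = 0$. -/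
/-- The `(2r-1) × (2r-1)` Sylvester matrix of a monic degree-`r` polynomial
`f = Σ_j a j * x^(r-j)` and its derivative `f'`; its determinant is `Res(f, f')`. -/
def sylvesterFDeriv (R : Type*) [CommRing R] (r : ℕ) (a : ℕ → R) :
    Matrix (Fin (r - 1 + r)) (Fin (r - 1 + r)) R := fun i j =>
  if (i : ℕ) < r - 1 then
    (if (i : ℕ) ≤ (j : ℕ) ∧ (j : ℕ) ≤ (i : ℕ) + r then a ((j : ℕ) - (i : ℕ)) else 0)
  else
    (if (i : ℕ) - (r - 1) ≤ (j : ℕ) ∧ (j : ℕ) ≤ (i : ℕ) - (r - 1) + (r - 1) then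
      ((r - ((j : ℕ) - ((i : ℕ) - (r - 1)))) : ℕ) * a ((j : ℕ) - ((i : ℕ) - (r - 1)))
    else 0)

open Polynomial Finset

/-- Row potential. -/
def pA (k c : ℕ) : ℕ := min c 1 + (c - (k + 1))

/-- Column potential. -/
def pB (k j : ℕ) : ℕ := min j 1 + min (j - (k + 1)) 1 + (j - (2 * k + 2))

lemma sum_min_one (t m : ℕ) : ∑ x ∈ range m, min (x - t) 1 = m - (t + 1) := by
  induction m with
  | zero => simp
  | succ m ih => rw [Finset.sum_range_succ, ih]; omega

lemma sum_tsub (t m : ℕ) : 2 * ∑ x ∈ range m, (x - t) = (m - t) * (m - t - 1) := by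
  induction m with
  | zero => simp
  | succ m ih =>
    rw [Finset.sum_range_succ, Nat.mul_add, ih]
    rcases le_or_gt t m with h | h
    · obtain ⟨u, rfl⟩ := Nat.exists_eq_add_of_le h
      have e1 : t + u - t = u := by omega
      have e2 : t + u + 1 - t = u + 1 := by omega
      rw [e1, e2, Nat.add_sub_cancel]
      cases u with
      | zero => simp
      | succ v => simp only [Nat.add_sub_cancel]; ring
    · rw [show m - t = 0 by omega, show m + 1 - t = 0 by omega]

lemma det_dvd_of_forall {n : ℕ} (M : Matrix (Fin n) (Fin n) (Polynomial ℂ)) (b : Fin n → ℕ)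
    (h : ∀ i j, (X : Polynomial ℂ) ^ b j ∣ M i j) :
    (X : Polynomial ℂ) ^ (∑ j, b j) ∣ M.det := by
  rw [Matrix.det_apply]
  apply Finset.dvd_sum
  intro σ _
  have hp : (X : Polynomial ℂ) ^ (∑ j, b j) ∣ ∏ j, M (σ j) j := by
    rw [← Finset.prod_pow_eq_pow_sum]
    exact Finset.prod_dvd_prod_of_dvd _ _ (fun j _ => h (σ j) j)
  obtain hs | hs := Int.units_eq_one_or (Equiv.Perm.sign σ) <;> rw [hs]
  · simpa using hp
  · simpa using hp.neg_right

lemma akey (k r : ℕ) (g : ℕ → Polynomial ℂ) (c m : ℕ) :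
    (X : Polynomial ℂ) ^ pB k (c + m) ∣ (X : Polynomial ℂ) ^ pA k c *
      (if m = 0 then 1 else if m ≤ k then X * g m
        else if m ≤ r then X ^ (m - k) * g m else 0) := by
  split_ifs with h1 h2 h3
  · subst h1
    rw [mul_one, Nat.add_zero]
    exact pow_dvd_pow _ (by unfold pA pB; omega)
  · have e : (X : Polynomial ℂ) ^ pA k c * (X * g m) = X ^ (pA k c + 1) * g m := by
      rw [pow_succ]; ring
    rw [e]
    exact dvd_mul_of_dvd_left (pow_dvd_pow _ (by unfold pA pB; omega)) _
  · have e : (X : Polynomial ℂ) ^ pA k c * (X ^ (m - k) * g m)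
        = X ^ (pA k c + (m - k)) * g m := by
      rw [pow_add]; ring
    rw [e]
    exact dvd_mul_of_dvd_left (pow_dvd_pow _ (by unfold pA pB; omega)) _
  · rw [mul_zero]
    exact dvd_zero _

lemma sum_split (k m : ℕ) :
    ∑ j ∈ range m, pB k j = (m - 1) + (m - (k + 2)) + ∑ x ∈ range m, (x - (2 * k + 2)) := by
  unfold pB
  rw [Finset.sum_add_distrib, Finset.sum_add_distrib, sum_min_one]
  have h0 := sum_min_one 0 m
  simp only [Nat.sub_zero] at h0
  rw [h0]

lemma sum_splitA (k m : ℕ) :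
    ∑ c ∈ range m, pA k c = (m - 1) + ∑ x ∈ range m, (x - (k + 1)) := by
  unfold pA
  rw [Finset.sum_add_distrib]
  have h0 := sum_min_one 0 m
  simp only [Nat.sub_zero] at h0
  rw [h0]

lemma sum_pot (k l r : ℕ) (hr : r = k + l + 1) :
    ∑ j ∈ range (r - 1 + r), pB k j
      = ((∑ c ∈ range (r - 1), pA k c) + ∑ c ∈ range r, pA k c) + (r + l ^ 2 - 1) := by
  subst hr
  rw [sum_split, sum_splitA, sum_splitA]
  set n := k + l + 1 - 1 + (k + l + 1) with hn
  have hq := sum_tsub (2 * k + 2) n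
  have hp1 := sum_tsub (k + 1) (k + l + 1 - 1)
  have hp2 := sum_tsub (k + 1) (k + l + 1)
  set q := ∑ x ∈ range n, (x - (2 * k + 2))
  set p1 := ∑ x ∈ range (k + l + 1 - 1), (x - (k + 1))
  set p2 := ∑ x ∈ range (k + l + 1), (x - (k + 1))
  match l with
  | 0 =>
    rw [show n - (2 * k + 2) = 0 by omega] at hq
    rw [show k + 0 + 1 - 1 - (k + 1) = 0 by omega] at hp1
    rw [show k + 0 + 1 - (k + 1) = 0 by omega] at hp2
    simp only [Nat.zero_mul] at hq hp1 hp2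
    omega
  | 1 =>
    rw [show n - (2 * k + 2) = 1 by omega, show (1:ℕ) - 1 = 0 by omega,
      Nat.mul_zero] at hq
    rw [show k + 1 + 1 - 1 - (k + 1) = 0 by omega] at hp1
    rw [show k + 1 + 1 - (k + 1) = 1 by omega, show (1:ℕ) - 1 = 0 by omega,
      Nat.mul_zero] at hp2
    simp only [Nat.zero_mul] at hp1
    omega
  | (v + 2) =>
    rw [show n - (2 * k + 2) = 2 * v + 3 by omega,
      show 2 * v + 3 - 1 = 2 * v + 2 by omega] at hq
    rw [show k + (v + 2) + 1 - 1 - (k + 1) = v + 1 by omega,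
      show v + 1 - 1 = v by omega] at hp1
    rw [show k + (v + 2) + 1 - (k + 1) = v + 2 by omega,
      show v + 2 - 1 = v + 1 by omega] at hp2
    have g1 : n - 1 = 2 * k + 2 * v + 4 := by omega
    have g2 : n - (k + 2) = k + 2 * v + 3 := by omega
    have g3 : k + (v + 2) + 1 - 1 - 1 = k + v + 1 := by omega
    have g4 : k + (v + 2) + 1 - 1 = k + v + 2 := by omega
    have g5 : k + (v + 2) + 1 + (v + 2) ^ 2 - 1 = k + v + 2 + (v + 2) ^ 2 := by omega
    rw [g1, g2, g3, g4, g5]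
    apply Nat.eq_of_mul_eq_mul_left (show 0 < 2 by norm_num)
    zify at hq hp1 hp2 ⊢
    linear_combination hq - hp1 - hp2

/-- For `f(x) = x^r + Σ_{a=1}^k ε g_a(ε) x^{r-a}
+ Σ_{b=1}^{l+1} ε^b g_{k+b}(ε) x^{l+1-b}` with `r = k+l+1` and the `g_j` polynomial
functions of `ε`, the resultant `Res(f, f')` vanishes to order at least `r + l² - 1` at
`ε = 0`, i.e. `ε^(r+l²-1)` divides it. -/
theorem stmt_14 (k l r : ℕ) (hr : r = k + l + 1) (g : ℕ → Polynomial ℂ) :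
    (Polynomial.X : Polynomial ℂ) ^ (r + l ^ 2 - 1) ∣
      (sylvesterFDeriv (Polynomial ℂ) r (fun j =>
        if j = 0 then 1
        else if j ≤ k then Polynomial.X * g j
        else if j ≤ r then Polynomial.X ^ (j - k) * g j
        else 0)).det := by
  set a : ℕ → Polynomial ℂ := fun j =>
    if j = 0 then 1
    else if j ≤ k then Polynomial.X * g j
    else if j ≤ r then Polynomial.X ^ (j - k) * g j
    else 0 with ha
  set M := sylvesterFDeriv (Polynomial ℂ) r a with hM
  set α : Fin (r - 1 + r) → ℕ :=
    fun i => (fun c => if c < r - 1 then pA k c else pA k (c - (r - 1))) (i : ℕ) with hα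
  set β : Fin (r - 1 + r) → ℕ := fun j => pB k (j : ℕ) with hβ
  have hfeas : ∀ i j : Fin (r - 1 + r),
      (X : Polynomial ℂ) ^ β j ∣ (X : Polynomial ℂ) ^ α i * M i j := by
    intro i j
    rw [hM, hα, hβ, sylvesterFDeriv]
    dsimp only
    by_cases hi : (i : ℕ) < r - 1
    · rw [if_pos hi, if_pos hi]
      by_cases hband : (i : ℕ) ≤ (j : ℕ) ∧ (j : ℕ) ≤ (i : ℕ) + r
      · rw [if_pos hband]
        rw [show (j : ℕ) = (i : ℕ) + ((j : ℕ) - (i : ℕ)) by omega]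
        rw [show (i : ℕ) + ((j : ℕ) - (i : ℕ)) - (i : ℕ) = (j : ℕ) - (i : ℕ) by omega]
        exact akey k r g (i : ℕ) ((j : ℕ) - (i : ℕ))
      · rw [if_neg hband, mul_zero]
        exact dvd_zero _
    · rw [if_neg hi, if_neg hi]
      by_cases hband : (i : ℕ) - (r - 1) ≤ (j : ℕ) ∧
          (j : ℕ) ≤ (i : ℕ) - (r - 1) + (r - 1)
      · rw [if_pos hband]
        set c := (i : ℕ) - (r - 1) with hc
        set m := (j : ℕ) - c with hm
        have hj : (j : ℕ) = c + m := by omega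
        rw [hj]
        have hk := akey k r g c m
        have e : (X : Polynomial ℂ) ^ pA k c * (((r - m : ℕ) : Polynomial ℂ) * a m)
            = ((r - m : ℕ) : Polynomial ℂ) * ((X : Polynomial ℂ) ^ pA k c * a m) := by
          ring
        rw [e]
        exact hk.mul_left _
      · rw [if_neg hband, mul_zero]
        exact dvd_zero _
  have h2 : (X : Polynomial ℂ) ^ (∑ j, β j) ∣
      (Matrix.of fun i j => (X : Polynomial ℂ) ^ α i * M i j).det :=
    det_dvd_of_forall _ β (fun i j => hfeas i j)
  rw [Matrix.det_mul_column, Finset.prod_pow_eq_pow_sum] at h2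
  have hβs : ∑ j, β j = ∑ j ∈ range (r - 1 + r), pB k j := by
    rw [hβ]; exact Fin.sum_univ_eq_sum_range _ _
  have hαs : ∑ i, α i = (∑ c ∈ range (r - 1), pA k c) + ∑ c ∈ range r, pA k c := by
    rw [hα, Fin.sum_univ_eq_sum_range
      (fun c => if c < r - 1 then pA k c else pA k (c - (r - 1))) (r - 1 + r)]
    rw [Finset.sum_range_add]
    congr 1
    · exact Finset.sum_congr rfl (fun x hx => by rw [if_pos (mem_range.mp hx)])
    · exact Finset.sum_congr rfl (fun x hx => by
        rw [if_neg (by omega), Nat.add_sub_cancel_left])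
  rw [hβs, hαs, sum_pot k l r hr, pow_add] at h2
  exact (mul_dvd_mul_iff_left (pow_ne_zero _ Polynomial.X_ne_zero)).mp h2
end
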